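/- Let (M,F,g) be a foliated Riemannian manifold, f a smooth positive basic function, and g_f the warped metric. For vector fields X, Y, Z, W all orthogonal to F, the curvature tensors satisfy ⟨R^f(X,Y)Z,W⟩_f = ⟨R(X,Y)Z,W⟩ − 2(1−f²)⟨A(X,Y),A(Z,W)⟩ + (1−f²)(⟨A(X,W),A(Y,Z)⟩ − ⟨A(X,Z),A(Y,W)⟩) − ((1−f²)/f²)(⟨S(X,W),S(Y,Z)⟩ − ⟨S(X,Z),S(Y,W)⟩), where A and S are the integrability tensor and second fundamental form of F^⊥. -/

import Mathlib

open scoped RealInnerProductSpace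

/-- Abstract model of the smooth vector-field calculus of a foliated Riemannian
manifold `(M, 𝓕, g)`.  Here `C` plays the role of the algebra of smooth
functions on `M` and `V` that of the `C`-module of smooth vector fields.
`F` is the submodule of sections tangent to the foliation, `Fp` the submodule
of sections orthogonal to it, `pt`/`pp` the corresponding projections,
`g` the Riemannian metric, `lie` the Lie bracket, `act` the action of a vector
field on a function (directional derivative) and `nabla` the Levi-Civita
connection of `g`. -/
structure FoliatedRiemann (C : Type*) (V : Type*) [CommRing C] [Algebra ℝ C]
    [AddCommGroup V] [Module C V] where
  g : V → V → C
  lie : V → V → V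
  act : V → C → C
  nabla : V → V → V
  F : Submodule C V
  Fp : Submodule C V
  pt : V → V
  pp : V → V
  g_symm : ∀ v w, g v w = g w v
  g_addl : ∀ u v w, g (u + v) w = g u w + g v w
  g_smull : ∀ (c : C) (v w : V), g (c • v) w = c * g v w
  g_nondeg : ∀ v, (∀ w, g v w = 0) → v = 0
  pt_mem : ∀ v, pt v ∈ F
  pp_mem : ∀ v, pp v ∈ Fp
  decomp : ∀ v, pt v + pp v = v
  pt_of_mem : ∀ v ∈ F, pt v = v
  pp_of_mem : ∀ v ∈ Fp, pp v = v
  orth : ∀ u x, u ∈ F → x ∈ Fp → g u x = 0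
  full_orth : ∀ v, (∀ u ∈ F, g v u = 0) → v ∈ Fp
  torsion_free : ∀ v w, nabla v w - nabla w v = lie v w
  compat : ∀ e v w, act e (g v w) = g (nabla e v) w + g v (nabla e w)
  nabla_addl : ∀ u v w, nabla (u + v) w = nabla u w + nabla v w
  nabla_smull : ∀ (c : C) (v w : V), nabla (c • v) w = c • nabla v w
  nabla_addr : ∀ u v w, nabla u (v + w) = nabla u v + nabla u w
  nabla_leibniz : ∀ (u : V) (c : C) (v : V), nabla u (c • v) = act u c • v + c • nabla u v
  act_add : ∀ (v : V) (a b : C), act v (a + b) = act v a + act v b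
  act_mul : ∀ (v : V) (a b : C), act v (a * b) = act v a * b + a * act v b
  act_const : ∀ (v : V) (r : ℝ), act v (algebraMap ℝ C r) = 0

namespace FoliatedRiemann

variable {C V : Type*} [CommRing C] [Algebra ℝ C] [AddCommGroup V] [Module C V]
variable (M : FoliatedRiemann C V)

/-- A basic function: constant along the leaves of the foliation. -/
def Basic (f : C) : Prop := ∀ u ∈ M.F, M.act u f = 0

/-- The warped metric `g_f`: equal to `f² g` on tangent components and to `g`
on orthogonal components. -/
def gf (f : C) (v w : V) : C := f ^ 2 * M.g (M.pt v) (M.pt w) + M.g (M.pp v) (M.pp w)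

/-- The curvature tensor of a connection `n`. -/
def Rc (n : V → V → V) (x y z : V) : V := n x (n y z) - n y (n x z) - n (M.lie x y) z

/-- Lie derivative of a metric `h` in the direction `u`, evaluated on `x, y`. -/
def lieDer (h : V → V → C) (u x y : V) : C :=
  M.act u (h x y) - h (M.lie u x) y - h x (M.lie u y)

/-- `n` is the Levi-Civita connection of the metric `h`: it is torsion free and
metric-compatible (which determines it uniquely, by the Koszul formula). -/
def IsLeviCivita (n : V → V → V) (h : V → V → C) : Prop :=
  (∀ v w, n v w - n w v = M.lie v w) ∧
  (∀ e v w, M.act e (h v w) = h (n e v) w + h v (n e w))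

end FoliatedRiemann

/-!
Both connections are determined by the Koszul formula. For `z, w ⊥ 𝓕` and any `v`, every term
of the Koszul expression for `g_f(∇^f_v z, w)` has an argument orthogonal to `𝓕`, where `g_f = g`,
except `g_f([z,w], v)`; since the `𝓕`-part of `[z,w]` is `2A(z,w)`, this gives
`g_f(∇^f_v z, w) = g(∇_v z, w) + (1 - f²) g(A(z,w), v)`. In the same way, for `y, z ⊥ 𝓕` the field
`∇^f_y z` has `𝓕`-component `A(y,z) + f⁻² S(y,z)` (against `A(y,z) + S(y,z)` for `∇_y z`) and the
same `𝓕^⊥`-component as `∇_y z`. Expanding `R^f(x,y)z` against `w` by metric compatibility, the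
discrepancy with `R` comes only from `g_f(∇^f_y z, ∇^f_x w) - g(∇_y z, ∇_x w)` and from the
bracket term `(1 - f²) g(A(z,w), [x,y]) = 2(1 - f²) g(A(x,y), A(z,w))`.
-/

namespace FoliatedRiemann

variable {C V : Type*} [CommRing C] [Algebra ℝ C] [AddCommGroup V] [Module C V]

lemma two_mul_half_smul (c : C) : 2 * (1/2 : ℝ) • c = c := by
  rw [two_mul, ← two_smul ℝ, smul_smul]
  norm_num

lemma eq_of_two_mul_eq_two_mul {a b : C} (h : 2 * a = 2 * b) : a = b :=
  calc a = (1/2 : ℝ) • (2 * a) := by rw [← mul_smul_comm, two_mul_half_smul]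
    _ = b := by rw [h, ← mul_smul_comm, two_mul_half_smul]

variable (M : FoliatedRiemann C V)

lemma g_subl (u v w : V) : M.g (u - v) w = M.g u w - M.g v w :=
  map_sub (AddMonoidHom.mk' (M.g · w) (M.g_addl · · w)) u v

lemma g_addr (u v w : V) : M.g u (v + w) = M.g u v + M.g u w := by
  rw [M.g_symm, M.g_addl, M.g_symm v, M.g_symm w]

lemma g_smulr (c : C) (v w : V) : M.g v (c • w) = c * M.g v w := by
  rw [M.g_symm, M.g_smull, M.g_symm]

lemma act_zero (v : V) : M.act v 0 = 0 := by
  simpa using M.act_const v 0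

lemma isLeviCivita_nabla : M.IsLeviCivita M.nabla M.g :=
  ⟨M.torsion_free, M.compat⟩

lemma g_eq_g_pt {u : V} (hu : u ∈ M.F) (v : V) : M.g v u = M.g (M.pt v) u := by
  conv_lhs => rw [← M.decomp v]
  rw [M.g_addl, M.g_symm (M.pp v), M.orth _ _ hu (M.pp_mem v), add_zero]

lemma g_eq_g_pp {w : V} (hw : w ∈ M.Fp) (v : V) : M.g v w = M.g (M.pp v) w := by
  conv_lhs => rw [← M.decomp v]
  rw [M.g_addl, M.orth _ _ (M.pt_mem v) hw, zero_add]

lemma g_decomp (v w : V) : M.g v w = M.g (M.pt v) (M.pt w) + M.g (M.pp v) (M.pp w) := by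
  conv_lhs => rw [← M.decomp v]
  rw [M.g_addl, M.g_symm (M.pt v), M.g_eq_g_pt (M.pt_mem v), M.g_symm (M.pp v),
    M.g_eq_g_pp (M.pp_mem v), M.g_symm (M.pt w), M.g_symm (M.pp w)]

lemma g_pt_right {u : V} (hu : u ∈ M.F) (v : V) : M.g u (M.pt v) = M.g u v := by
  rw [M.g_symm, ← M.g_eq_g_pt hu, M.g_symm]

lemma eq_zero_of_forall_g_eq_zero {v : V} (hF : ∀ u ∈ M.F, M.g v u = 0)
    (hFp : ∀ w ∈ M.Fp, M.g v w = 0) : v = 0 :=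
  M.g_nondeg v fun w => by
    rw [← M.decomp w, M.g_addr, hF _ (M.pt_mem w), hFp _ (M.pp_mem w), add_zero]

lemma ext_F {a b : V} (ha : a ∈ M.F) (hb : b ∈ M.F) (h : ∀ u ∈ M.F, M.g a u = M.g b u) :
    a = b :=
  sub_eq_zero.mp <| M.eq_zero_of_forall_g_eq_zero
    (fun u hu => by rw [M.g_subl, h u hu, sub_self])
    (fun w hw => by rw [M.g_subl, M.orth _ _ ha hw, M.orth _ _ hb hw, sub_self])

lemma ext_Fp {a b : V} (ha : a ∈ M.Fp) (hb : b ∈ M.Fp)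
    (h : ∀ w ∈ M.Fp, M.g a w = M.g b w) : a = b :=
  sub_eq_zero.mp <| M.eq_zero_of_forall_g_eq_zero
    (fun u hu => by rw [M.g_subl, M.g_symm a, M.g_symm b, M.orth _ _ hu ha, M.orth _ _ hu hb,
      sub_self])
    (fun w hw => by rw [M.g_subl, h w hw, sub_self])

lemma pt_sub (v w : V) : M.pt (v - w) = M.pt v - M.pt w :=
  M.ext_F (M.pt_mem _) (sub_mem (M.pt_mem v) (M.pt_mem w)) fun u hu => by
    rw [← M.g_eq_g_pt hu, M.g_subl, M.g_subl, ← M.g_eq_g_pt hu, ← M.g_eq_g_pt hu]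

lemma pp_sub (v w : V) : M.pp (v - w) = M.pp v - M.pp w :=
  M.ext_Fp (M.pp_mem _) (sub_mem (M.pp_mem v) (M.pp_mem w)) fun u hu => by
    rw [← M.g_eq_g_pp hu, M.g_subl, M.g_subl, ← M.g_eq_g_pp hu, ← M.g_eq_g_pp hu]

lemma koszul {h : V → V → C} {n : V → V → V} (h_symm : ∀ v w, h v w = h w v)
    (h_subl : ∀ u v w, h (u - v) w = h u w - h v w) (hn : M.IsLeviCivita n h) (x y v : V) :
    2 * h (n x y) v
      = M.act x (h y v) + M.act y (h x v) - M.act v (h x y)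
        + h (M.lie x y) v - h (M.lie x v) y - h (M.lie y v) x := by
  rw [hn.2 x y v, hn.2 y x v, hn.2 v x y, ← hn.1 x y, ← hn.1 x v, ← hn.1 y v,
    h_subl, h_subl, h_subl, h_symm y (n x v), h_symm x (n y v), h_symm x (n v y)]
  ring

structure IsIntegrabilityTensor (A : V → V → V) : Prop where
  mem : ∀ x y, x ∈ M.Fp → y ∈ M.Fp → A x y ∈ M.F
  g_eq : ∀ x y, x ∈ M.Fp → y ∈ M.Fp → ∀ u ∈ M.F,
    M.g (A x y) u = (1/2 : ℝ) • (M.g (M.nabla x y) u - M.g (M.nabla y x) u)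

structure IsSecondFundamentalForm (S : V → V → V) : Prop where
  mem : ∀ x y, x ∈ M.Fp → y ∈ M.Fp → S x y ∈ M.F
  g_eq : ∀ x y, x ∈ M.Fp → y ∈ M.Fp → ∀ u ∈ M.F,
    M.g (S x y) u = (1/2 : ℝ) • (M.g (M.nabla x y) u + M.g (M.nabla y x) u)

variable {M}

lemma IsIntegrabilityTensor.two_mul_g_eq_g_lie {A : V → V → V} (hA : M.IsIntegrabilityTensor A)
    {x y u : V} (hx : x ∈ M.Fp) (hy : y ∈ M.Fp) (hu : u ∈ M.F) :
    2 * M.g (A x y) u = M.g (M.lie x y) u := by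
  rw [hA.g_eq x y hx hy u hu, two_mul_half_smul, ← M.torsion_free, M.g_subl]

lemma IsIntegrabilityTensor.two_smul_eq_pt_lie {A : V → V → V} (hA : M.IsIntegrabilityTensor A)
    {x y : V} (hx : x ∈ M.Fp) (hy : y ∈ M.Fp) : (2 : C) • A x y = M.pt (M.lie x y) :=
  M.ext_F (Submodule.smul_mem _ _ (hA.mem x y hx hy)) (M.pt_mem _) fun u hu => by
    rw [M.g_smull, hA.two_mul_g_eq_g_lie hx hy hu, M.g_eq_g_pt hu]

variable (M)

lemma g_nabla_eq {A S : V → V → V} (hA : M.IsIntegrabilityTensor A)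
    (hS : M.IsSecondFundamentalForm S) {x y u : V} (hx : x ∈ M.Fp) (hy : y ∈ M.Fp)
    (hu : u ∈ M.F) : M.g (M.nabla x y) u = M.g (A x y) u + M.g (S x y) u := by
  apply eq_of_two_mul_eq_two_mul
  rw [mul_add, hA.g_eq x y hx hy u hu, hS.g_eq x y hx hy u hu, two_mul_half_smul,
    two_mul_half_smul]
  ring

lemma pt_nabla {A S : V → V → V} (hA : M.IsIntegrabilityTensor A)
    (hS : M.IsSecondFundamentalForm S) {x y : V} (hx : x ∈ M.Fp) (hy : y ∈ M.Fp) :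
    M.pt (M.nabla x y) = A x y + S x y :=
  M.ext_F (M.pt_mem _) (add_mem (hA.mem x y hx hy) (hS.mem x y hx hy)) fun u hu => by
    rw [← M.g_eq_g_pt hu, M.g_addl, M.g_nabla_eq hA hS hx hy hu]

section Warped

variable (f : C)

lemma gf_eq_g_add (v w : V) : M.gf f v w = M.g v w + (f ^ 2 - 1) * M.g (M.pt v) (M.pt w) := by
  rw [gf, M.g_decomp v w]
  ring

lemma gf_symm (v w : V) : M.gf f v w = M.gf f w v := by
  rw [gf, gf, M.g_symm (M.pt v), M.g_symm (M.pp v)]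

lemma gf_subl (u v w : V) : M.gf f (u - v) w = M.gf f u w - M.gf f v w := by
  rw [gf, gf, gf, M.pt_sub, M.pp_sub, M.g_subl, M.g_subl]
  ring

lemma gf_of_mem_Fp_right {w : V} (hw : w ∈ M.Fp) (v : V) : M.gf f v w = M.g v w := by
  rw [gf_eq_g_add, M.g_symm (M.pt v), ← M.g_eq_g_pt (M.pt_mem v), M.g_symm w,
    M.orth _ _ (M.pt_mem v) hw, mul_zero, add_zero]

lemma gf_of_mem_F_right {u : V} (hu : u ∈ M.F) (v : V) : M.gf f v u = f ^ 2 * M.g v u := by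
  rw [gf_eq_g_add, M.pt_of_mem u hu, ← M.g_eq_g_pt hu]
  ring

variable {f}

lemma gf_nf_left_of_mem_Fp {nf A : V → V → V} (hnf : M.IsLeviCivita nf (M.gf f))
    (hA : M.IsIntegrabilityTensor A) (v : V) {z w : V} (hz : z ∈ M.Fp) (hw : w ∈ M.Fp) :
    M.gf f (nf v z) w = M.g (M.nabla v z) w + (1 - f ^ 2) * M.g (A z w) v := by
  apply eq_of_two_mul_eq_two_mul
  have Kf := M.koszul (M.gf_symm f) (M.gf_subl f) hnf v z w
  have Kg := M.koszul M.g_symm M.g_subl M.isLeviCivita_nabla v z w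
  simp only [M.gf_of_mem_Fp_right f hz, M.gf_of_mem_Fp_right f hw] at Kf ⊢
  rw [M.gf_eq_g_add, ← hA.two_smul_eq_pt_lie hz hw, M.g_smull,
    M.g_pt_right (hA.mem z w hz hw)] at Kf
  linear_combination Kf - Kg

lemma gf_nf_left_of_mem_F {nf A S : V → V → V} (hnf : M.IsLeviCivita nf (M.gf f))
    (hA : M.IsIntegrabilityTensor A) (hS : M.IsSecondFundamentalForm S)
    {y z u : V} (hy : y ∈ M.Fp) (hz : z ∈ M.Fp) (hu : u ∈ M.F) :
    M.gf f (nf y z) u = f ^ 2 * M.g (A y z) u + M.g (S y z) u := by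
  apply eq_of_two_mul_eq_two_mul
  have Kf := M.koszul (M.gf_symm f) (M.gf_subl f) hnf y z u
  have Kg := M.koszul M.g_symm M.g_subl M.isLeviCivita_nabla y z u
  have hyu : M.g y u = 0 := by rw [M.g_symm]; exact M.orth u y hu hy
  have hzu : M.g z u = 0 := by rw [M.g_symm]; exact M.orth u z hu hz
  simp only [M.gf_of_mem_F_right f hu, M.gf_of_mem_Fp_right f hy, M.gf_of_mem_Fp_right f hz,
    hyu, hzu, mul_zero, M.act_zero] at Kf Kg ⊢
  rw [← hA.two_mul_g_eq_g_lie hy hz hu] at Kf Kg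
  linear_combination Kf - Kg + 2 * M.g_nabla_eq hA hS hy hz hu

lemma pt_nf {finv : C} (hfinv : f * finv = 1) {nf A S : V → V → V}
    (hnf : M.IsLeviCivita nf (M.gf f)) (hA : M.IsIntegrabilityTensor A)
    (hS : M.IsSecondFundamentalForm S) {y z : V} (hy : y ∈ M.Fp) (hz : z ∈ M.Fp) :
    M.pt (nf y z) = A y z + finv ^ 2 • S y z :=
  M.ext_F (M.pt_mem _) (add_mem (hA.mem y z hy hz) (Submodule.smul_mem _ _ (hS.mem y z hy hz)))
    fun u hu => by
      have h := M.gf_nf_left_of_mem_F hnf hA hS hy hz hu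
      rw [M.gf_of_mem_F_right f hu, M.g_eq_g_pt hu] at h
      rw [M.g_addl, M.g_smull]
      linear_combination
        finv ^ 2 * h + (M.g (A y z) u - M.g (M.pt (nf y z)) u) * (f * finv + 1) * hfinv

lemma pp_nf {nf A : V → V → V} (hnf : M.IsLeviCivita nf (M.gf f))
    (hA : M.IsIntegrabilityTensor A) {y z : V} (hy : y ∈ M.Fp) (hz : z ∈ M.Fp) :
    M.pp (nf y z) = M.pp (M.nabla y z) :=
  M.ext_Fp (M.pp_mem _) (M.pp_mem _) fun w hw => by
    rw [← M.g_eq_g_pp hw, ← M.g_eq_g_pp hw, ← M.gf_of_mem_Fp_right f hw,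
      M.gf_nf_left_of_mem_Fp hnf hA y hz hw, M.orth _ _ (hA.mem z w hz hw) hy, mul_zero,
      add_zero]

lemma gf_nf_nf {finv : C} (hfinv : f * finv = 1) {nf A S : V → V → V}
    (hnf : M.IsLeviCivita nf (M.gf f)) (hA : M.IsIntegrabilityTensor A)
    (hS : M.IsSecondFundamentalForm S) {x y z w : V}
    (hx : x ∈ M.Fp) (hy : y ∈ M.Fp) (hz : z ∈ M.Fp) (hw : w ∈ M.Fp) :
    M.gf f (nf y z) (nf x w)
      = M.g (M.nabla y z) (M.nabla x w) + (f ^ 2 - 1) * M.g (A y z) (A x w)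
        + (finv ^ 2 - 1) * M.g (S y z) (S x w) := by
  rw [gf, M.pt_nf hfinv hnf hA hS hy hz, M.pt_nf hfinv hnf hA hS hx hw, M.pp_nf hnf hA hy hz,
    M.pp_nf hnf hA hx hw, M.g_decomp (M.nabla y z), M.pt_nabla hA hS hy hz,
    M.pt_nabla hA hS hx hw]
  simp only [M.g_addl, M.g_addr, M.g_smull, M.g_smulr]
  linear_combination (M.g (A y z) (S x w) + M.g (S y z) (A x w)
    + finv ^ 2 * M.g (S y z) (S x w)) * (f * finv + 1) * hfinv

lemma gf_nf_nf_left {finv : C} (hfinv : f * finv = 1) {nf A S : V → V → V}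
    (hnf : M.IsLeviCivita nf (M.gf f)) (hA : M.IsIntegrabilityTensor A)
    (hS : M.IsSecondFundamentalForm S) {x y z w : V}
    (hx : x ∈ M.Fp) (hy : y ∈ M.Fp) (hz : z ∈ M.Fp) (hw : w ∈ M.Fp) :
    M.gf f (nf x (nf y z)) w
      = M.g (M.nabla x (M.nabla y z)) w + (1 - f ^ 2) * M.g (A y z) (A x w)
        + (1 - finv ^ 2) * M.g (S y z) (S x w) := by
  have hyzw : M.gf f (nf y z) w = M.g (M.nabla y z) w := by
    rw [M.gf_nf_left_of_mem_Fp hnf hA y hz hw, M.orth _ _ (hA.mem z w hz hw) hy, mul_zero,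
      add_zero]
  have hf := hnf.2 x (nf y z) w
  rw [hyzw, M.gf_nf_nf hfinv hnf hA hS hx hy hz hw] at hf
  linear_combination M.compat x (M.nabla y z) w - hf

lemma gf_nf_lie_left {nf A : V → V → V} (hnf : M.IsLeviCivita nf (M.gf f))
    (hA : M.IsIntegrabilityTensor A) {x y z w : V}
    (hx : x ∈ M.Fp) (hy : y ∈ M.Fp) (hz : z ∈ M.Fp) (hw : w ∈ M.Fp) :
    M.gf f (nf (M.lie x y) z) w
      = M.g (M.nabla (M.lie x y) z) w + 2 * (1 - f ^ 2) * M.g (A x y) (A z w) := by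
  rw [M.gf_nf_left_of_mem_Fp hnf hA _ hz hw, ← M.g_pt_right (hA.mem z w hz hw),
    ← hA.two_smul_eq_pt_lie hx hy, M.g_smulr, M.g_symm (A z w)]
  ring

end Warped

end FoliatedRiemann

theorem warped_curvature_four_orthogonal_general
    {C V : Type*} [CommRing C] [Algebra ℝ C]
    [AddCommGroup V] [Module C V]
    (M : FoliatedRiemann C V) (f finv : C) (hfinv : f * finv = 1)
    (nf A S : V → V → V)
    (hnf : M.IsLeviCivita nf (M.gf f))
    (hAval : ∀ x y, x ∈ M.Fp → y ∈ M.Fp → A x y ∈ M.F)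
    (hAdef : ∀ x y, x ∈ M.Fp → y ∈ M.Fp → ∀ u ∈ M.F,
      M.g (A x y) u = (1/2 : ℝ) • (M.g (M.nabla x y) u - M.g (M.nabla y x) u))
    (hSval : ∀ x y, x ∈ M.Fp → y ∈ M.Fp → S x y ∈ M.F)
    (hSdef : ∀ x y, x ∈ M.Fp → y ∈ M.Fp → ∀ u ∈ M.F,
      M.g (S x y) u = (1/2 : ℝ) • (M.g (M.nabla x y) u + M.g (M.nabla y x) u)) :
    ∀ x y z w, x ∈ M.Fp → y ∈ M.Fp → z ∈ M.Fp → w ∈ M.Fp →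
      M.gf f (M.Rc nf x y z) w
        = M.g (M.Rc M.nabla x y z) w
          - (2 : C) * (1 - f ^ 2) * M.g (A x y) (A z w)
          + (1 - f ^ 2) * (M.g (A x w) (A y z) - M.g (A x z) (A y w))
          - (1 - f ^ 2) * finv ^ 2 * (M.g (S x w) (S y z) - M.g (S x z) (S y w)) := by
  intro x y z w hx hy hz hw
  have hA : M.IsIntegrabilityTensor A := ⟨hAval, hAdef⟩
  have hS : M.IsSecondFundamentalForm S := ⟨hSval, hSdef⟩
  rw [FoliatedRiemann.Rc, FoliatedRiemann.Rc, M.gf_subl, M.gf_subl, M.g_subl, M.g_subl,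
    M.gf_nf_nf_left hfinv hnf hA hS hx hy hz hw, M.gf_nf_nf_left hfinv hnf hA hS hy hx hz hw,
    M.gf_nf_lie_left hnf hA hx hy hz hw, M.g_symm (A y z), M.g_symm (S y z)]
  linear_combination (M.g (S x z) (S y w) - M.g (S x w) (S y z)) * (f * finv + 1) * hfinv

/-- the curvature tensor of the warped metric on four vectors
orthogonal to the foliation:
`⟨R^f(X,Y)Z,W⟩_f = ⟨R(X,Y)Z,W⟩ − 2(1−f²)⟨A(X,Y),A(Z,W)⟩
  + (1−f²)(⟨A(X,W),A(Y,Z)⟩ − ⟨A(X,Z),A(Y,W)⟩)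
  − ((1−f²)/f²)(⟨S(X,W),S(Y,Z)⟩ − ⟨S(X,Z),S(Y,W)⟩)`. -/
theorem warped_curvature_four_orthogonal
    {C V : Type*} [CommRing C] [PartialOrder C] [Algebra ℝ C]
    [AddCommGroup V] [Module C V]
    (M : FoliatedRiemann C V) (f finv : C) (hfpos : 0 < f) (hfinv : f * finv = 1)
    (hbasic : M.Basic f)
    (nf A S : V → V → V)
    (hnf : M.IsLeviCivita nf (M.gf f))
    (hAval : ∀ x y, x ∈ M.Fp → y ∈ M.Fp → A x y ∈ M.F)
    (hAdef : ∀ x y, x ∈ M.Fp → y ∈ M.Fp → ∀ u ∈ M.F,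
      M.g (A x y) u = (1/2 : ℝ) • (M.g (M.nabla x y) u - M.g (M.nabla y x) u))
    (hSval : ∀ x y, x ∈ M.Fp → y ∈ M.Fp → S x y ∈ M.F)
    (hSdef : ∀ x y, x ∈ M.Fp → y ∈ M.Fp → ∀ u ∈ M.F,
      M.g (S x y) u = (1/2 : ℝ) • (M.g (M.nabla x y) u + M.g (M.nabla y x) u)) :
    ∀ x y z w, x ∈ M.Fp → y ∈ M.Fp → z ∈ M.Fp → w ∈ M.Fp →
      M.gf f (M.Rc nf x y z) w
        = M.g (M.Rc M.nabla x y z) w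
          - (2 : C) * (1 - f ^ 2) * M.g (A x y) (A z w)
          + (1 - f ^ 2) * (M.g (A x w) (A y z) - M.g (A x z) (A y w))
          - (1 - f ^ 2) * finv ^ 2 * (M.g (S x w) (S y z) - M.g (S x z) (S y w)) :=
  warped_curvature_four_orthogonal_general M f finv hfinv nf A S hnf hAval hAdef hSval hSdef
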